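/- arXiv:2203.01251 — 2 statements merged into one kernel-verified Lean document; each statement's English description precedes it below -/
import Mathlib

section
/- Let ι be a finite index set, let (Ω, P) be a probability space, and let (X_i)_{i ∈ ι} and (X'_i)_{i ∈ ι} be families of α_i-valued random variables such that the combined family (X_i, X'_i)_{i ∈ ι} is mutually independent and, for each i, X'_i has the same distribution as X_i. For a subset S ⊆ ι define the resampled family X^S by (X^S)_i = X'_i if i ∈ S and (X^S)_i = X_i otherwise. Then for every measurable function f : (∏_{i ∈ ι} α_i) → Bool and every S ⊆ ι, P(f(X^S) ≠ f(X)) ≤ ∑_{i ∈ S} P(f(X^{{i}}) ≠ f(X)). -/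
/-!
Put `Y = (X i, X' i)ᵢ`. Independence and equality of marginals make the law of `Y` the product
`⨂ᵢ (μᵢ ⊗ μᵢ)`, which is invariant under exchanging `X i` and `X' i` for all `i` in any set `s`.
That exchange turns the pair `(X^(insert a s), X^s)` into `(X^{a}, X)`, so the two disagreement
events have the same probability, and induction on `S` with
`P(f X^(insert a s) ≠ f X) ≤ P(f X^(insert a s) ≠ f X^s) + P(f X^s ≠ f X)` gives the bound.
-/

open MeasureTheory

theorem measure_setOf_ne_le_add {Ω β : Type*} [MeasurableSpace Ω] (μ : Measure Ω)
    (u v w : Ω → β) :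
    μ {x | u x ≠ w x} ≤ μ {x | u x ≠ v x} + μ {x | v x ≠ w x} := by
  refine (measure_mono fun x hx => ?_).trans (measure_union_le _ _)
  by_contra h
  simp_all

section Resampling

variable {ι : Type*} [DecidableEq ι] {α : ι → Type*}

def resample (T : Finset ι) (y : ∀ i, α i × α i) : ∀ i, α i :=
  fun i => if i ∈ T then (y i).2 else (y i).1

def swapOn (T : Finset ι) (y : ∀ i, α i × α i) : ∀ i, α i × α i :=
  fun i => if i ∈ T then (y i).swap else y i

theorem swapOn_involutive (T : Finset ι) : Function.Involutive (swapOn (α := α) T) := by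
  intro y; funext i; by_cases h : i ∈ T <;> simp [swapOn, h]

theorem resample_swapOn (T U : Finset ι) (y : ∀ i, α i × α i) :
    resample T (swapOn U y) = resample (symmDiff T U) y := by
  funext i
  by_cases hT : i ∈ T <;> by_cases hU : i ∈ U <;>
    simp [resample, swapOn, Finset.mem_symmDiff, hT, hU]

theorem symmDiff_insert_self {a : ι} {s : Finset ι} (ha : a ∉ s) :
    symmDiff (insert a s) s = {a} := by
  ext i; by_cases h : i = a <;> simp [Finset.mem_symmDiff, h, ha]

variable [∀ i, MeasurableSpace (α i)]

theorem measurable_swapOn (T : Finset ι) : Measurable (swapOn (α := α) T) := by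
  refine measurable_pi_lambda _ fun i => ?_
  by_cases h : i ∈ T
  · simp only [swapOn, h, ↓reduceIte]
    exact measurable_swap.comp (measurable_pi_apply i)
  · simpa [swapOn, h] using measurable_pi_apply i

theorem measurable_resample (T : Finset ι) : Measurable (resample (α := α) T) := by
  refine measurable_pi_lambda _ fun i => ?_
  by_cases h : i ∈ T
  · simpa [resample, h] using (measurable_pi_apply i).snd
  · simpa [resample, h] using (measurable_pi_apply i).fst

theorem measurableEmbedding_swapOn (T : Finset ι) : MeasurableEmbedding (swapOn (α := α) T) :=
  (MeasurableEquiv.ofInvolutive _ (swapOn_involutive T) (measurable_swapOn T)).measurableEmbedding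

theorem map_swapOn_pi_prod_self [Fintype ι] (μ : ∀ i, Measure (α i))
    [∀ i, SigmaFinite (μ i)] (T : Finset ι) :
    (Measure.pi fun i => (μ i).prod (μ i)).map (swapOn T) =
      Measure.pi fun i => (μ i).prod (μ i) := by
  let g : ∀ i, α i × α i → α i × α i := fun i => if i ∈ T then Prod.swap else id
  have hg : ∀ i, ((μ i).prod (μ i)).map (g i) = (μ i).prod (μ i) := fun i => by
    by_cases h : i ∈ T
    · simp [g, h, Measure.prod_swap]
    · simp [g, h]
  have : ∀ i, SigmaFinite (((μ i).prod (μ i)).map (g i)) := fun i => by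
    rw [hg i]; infer_instance
  have hswap : swapOn (α := α) T = fun y i => g i (y i) := by
    funext y i; by_cases h : i ∈ T <;> simp [swapOn, g, h]
  rw [hswap, Measure.pi_map_pi fun i => ?_]
  · simp only [hg]
  · by_cases h : i ∈ T
    · simpa [g, h] using measurable_swap.aemeasurable
    · simpa [g, h] using aemeasurable_id

theorem measure_resample_ne_eq_symmDiff {ν : Measure (∀ i, α i × α i)} {s : Finset ι}
    (hν : ν.map (swapOn s) = ν) {β : Type*} (f : (∀ i, α i) → β) (T U : Finset ι) :
    ν {y | f (resample T y) ≠ f (resample U y)} =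
      ν {y | f (resample (symmDiff T s) y) ≠ f (resample (symmDiff U s) y)} := by
  conv_lhs => rw [← hν, (measurableEmbedding_swapOn s).map_apply]
  simp only [Set.preimage_ofPred_eq, resample_swapOn]

theorem measure_resample_ne_le_sum {ν : Measure (∀ i, α i × α i)}
    (hν : ∀ s, ν.map (swapOn s) = ν) {β : Type*} (f : (∀ i, α i) → β) (S : Finset ι) :
    ν {y | f (resample S y) ≠ f (resample ∅ y)} ≤
      ∑ i ∈ S, ν {y | f (resample {i} y) ≠ f (resample ∅ y)} := by
  induction S using Finset.induction_on with
  | empty => simp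
  | @insert a s ha ih =>
    have hstep : ν {y | f (resample (insert a s) y) ≠ f (resample s y)} =
        ν {y | f (resample {a} y) ≠ f (resample ∅ y)} := by
      rw [measure_resample_ne_eq_symmDiff (hν s), symmDiff_insert_self ha, symmDiff_self,
        Finset.bot_eq_empty]
    calc ν {y | f (resample (insert a s) y) ≠ f (resample ∅ y)}
        ≤ ν {y | f (resample (insert a s) y) ≠ f (resample s y)} +
            ν {y | f (resample s y) ≠ f (resample ∅ y)} :=
          measure_setOf_ne_le_add ν _ _ _
      _ ≤ ∑ i ∈ insert a s, ν {y | f (resample {i} y) ≠ f (resample ∅ y)} := by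
          rw [hstep, Finset.sum_insert ha]
          gcongr

end Resampling

theorem map_pair_eq_pi_prod {ι : Type*} [Fintype ι] {α : ι → Type*}
    [∀ i, MeasurableSpace (α i)] {Ω : Type*} [MeasurableSpace Ω] (P : Measure Ω)
    [IsFiniteMeasure P] {X X' : ∀ i, Ω → α i}
    (hX : ∀ i, Measurable (X i)) (hX' : ∀ i, Measurable (X' i))
    (hindep : ∀ (A A' : ∀ i, Set (α i)),
      (∀ i, MeasurableSet (A i)) → (∀ i, MeasurableSet (A' i)) →
      P {ω | ∀ i, X i ω ∈ A i ∧ X' i ω ∈ A' i} =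
        (∏ i, P {ω | X i ω ∈ A i}) * ∏ i, P {ω | X' i ω ∈ A' i}) :
    P.map (fun ω i => (X i ω, X' i ω)) =
      Measure.pi fun i => (P.map (X i)).prod (P.map (X' i)) := by
  have hY : Measurable fun ω i => (X i ω, X' i ω) :=
    measurable_pi_lambda _ fun i => (hX i).prodMk (hX' i)
  refine (Measure.pi_eq_generateFrom (fun _ => generateFrom_prod) (fun _ => isPiSystem_prod)
    (fun i => (P.map (X i)).toFiniteSpanningSetsIn.prod (P.map (X' i)).toFiniteSpanningSetsIn)
    fun B hB => ?_).symm
  choose A hA A' hA' hAA' using hB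
  obtain rfl : B = fun i => A i ×ˢ A' i := funext fun i => (hAA' i).symm
  rw [Measure.map_apply hY (.univ_pi fun i => (hA i).prod (hA' i))]
  simp only [Set.preimage, Set.mem_univ_pi, Set.mem_prod, Measure.prod_prod,
    Measure.map_apply (hX _) (hA _), Measure.map_apply (hX' _) (hA' _), Finset.prod_mul_distrib]
  exact hindep A A' hA hA'

/-- Let `ι` be a finite index set and `(X_i)`, `(X'_i)` families of `α i`-valued
random variables on a probability space `(Ω, P)` such that the combined family
`(X_i, X'_i)_{i ∈ ι}` is mutually independent (the joint law of all `2|ι|` variables is the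
product of their marginals, expressed here on measurable rectangles) and, for each `i`,
`X'_i` is distributed as `X_i`. For `S ⊆ ι`, the resampled family `X^S` replaces `X_i`
by `X'_i` for `i ∈ S`. Then for every measurable `f : (∏ i, α i) → Bool` and every `S`,
`P(f(X^S) ≠ f(X)) ≤ ∑_{i ∈ S} P(f(X^{{i}}) ≠ f(X))`. -/
theorem efron_stein_block_subadditivity
    {ι : Type*} [Fintype ι] [DecidableEq ι]
    {Ω : Type*} [MeasurableSpace Ω] {α : ι → Type*} [∀ i, MeasurableSpace (α i)]
    (P : Measure Ω) [IsProbabilityMeasure P]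
    (X X' : ∀ i, Ω → α i)
    (hX : ∀ i, Measurable (X i)) (hX' : ∀ i, Measurable (X' i))
    (hindep : ∀ (A A' : ∀ i, Set (α i)),
      (∀ i, MeasurableSet (A i)) → (∀ i, MeasurableSet (A' i)) →
      P {ω | ∀ i, X i ω ∈ A i ∧ X' i ω ∈ A' i} =
        (∏ i, P {ω | X i ω ∈ A i}) * ∏ i, P {ω | X' i ω ∈ A' i})
    (hident : ∀ i, ProbabilityTheory.IdentDistrib (X' i) (X i) P P)
    (f : (∀ i, α i) → Bool) (hf : Measurable f) (S : Finset ι) :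
    P {ω | f (fun i => if i ∈ S then X' i ω else X i ω) ≠ f (fun i => X i ω)} ≤
      ∑ i ∈ S,
        P {ω | f (fun j => if j = i then X' j ω else X j ω) ≠ f (fun j => X j ω)} := by
  set Y : Ω → ∀ i, α i × α i := fun ω i => (X i ω, X' i ω)
  have hY : Measurable Y := measurable_pi_lambda _ fun i => (hX i).prodMk (hX' i)
  have hlaw : P.map Y = Measure.pi fun i => (P.map (X i)).prod (P.map (X i)) := by
    simp only [Y, map_pair_eq_pi_prod P hX hX' hindep, (hident _).map_eq]
  have hswap : ∀ s, (P.map Y).map (swapOn s) = P.map Y := fun s => by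
    rw [hlaw]; exact map_swapOn_pi_prod_self _ s
  have hevent : ∀ T U : Finset ι, P.map Y {y | f (resample T y) ≠ f (resample U y)} =
      P {ω | f (resample T (Y ω)) ≠ f (resample U (Y ω))} := fun T U =>
    Measure.map_apply hY (measurableSet_eq_fun (hf.comp (measurable_resample T))
      (hf.comp (measurable_resample U))).compl
  have key := measure_resample_ne_le_sum hswap f S
  simp only [hevent, Y] at key
  unfold resample at key
  simpa only [Finset.mem_singleton, Finset.notMem_empty, if_false] using key
end

section
/- Let 0 ≤ λ₀ < λ₁ and c > 0, and for each integer n ≥ 1 let f_n : ℝ → ℝ satisfy: 0 ≤ f_n(λ) ≤ 1 for all λ ∈ [λ₀, λ₁]; f_n is nondecreasing on [λ₀, λ₁]; f_{n+1}(λ) ≤ f_n(λ) for all λ ∈ [λ₀, λ₁]; f_n is differentiable on (λ₀, λ₁) with ∑_{s=1}^{n} f_s(λ) > 0 and f_n'(λ) ≥ c · (n / ∑_{s=1}^{n} f_s(λ)) · f_n(λ) · (1 − f_n(λ)) for all λ ∈ (λ₀, λ₁). Then there exist λ̃ ∈ [λ₀, λ₁] and C > 0 such that: (i) for every λ ∈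 (λ₀, λ̃), limsup_{n → ∞} n^{−1} · log f_n(λ) < 0 (with the convention log 0 = −∞); and (ii) for every λ ∈ (λ̃, λ₁), inf_{n ≥ 1} f_n(λ) ≥ C · (λ − λ̃). -/
/-!
The threshold is the infimum of the points `y` at which the partial sums
`Σₙ(y) = ∑_{s ≤ n} f s y` grow almost linearly: `Σₙ(y) ≥ n^(1-ε)` for infinitely many `n`, for
every `ε > 0`.

Below it, `Σₙ ≤ n^(1-ε)` eventually, hence `f n ≤ 1/2` and `(f n)' ≥ (c/2) n^ε f n`; integrating,
`f n` decays like `exp (-t n^ε)` slightly further left, where the partial sums are therefore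
bounded, and a second integration gives exponential decay in `n`.

Above it, wherever all `f s ≤ 1/2` (`s ≥ M`), `G = ∑_{s ≤ k} f s / s` satisfies
`G' ≥ (c/2) ∑_{M ≤ s < k} f s / Σ_s ≥ (c/2) (log Σ_k - log M)` by telescoping logarithms.
Integrating over `[l, x]` and using `G(x) ≤ n + f n x (1 + log k)` together with
`log Σ_k(l) ≥ (1 - ε) log k` for infinitely many `k` gives `f n x ≥ (c/2) (x - l)` in the limit.
-/

open Filter Real Set Topology

theorem le_mul_exp_neg_of_mul_le_deriv {g : ℝ → ℝ} {a b κ : ℝ} (hab : a ≤ b)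
    (hg : ∀ y ∈ Icc a b, DifferentiableAt ℝ g y) (hκ : ∀ y ∈ Ioo a b, κ * g y ≤ deriv g y) :
    g a ≤ g b * exp (-(κ * (b - a))) := by
  set h : ℝ → ℝ := fun y => exp (-(κ * y)) * g y
  have hd : ∀ y ∈ Icc a b, HasDerivAt h (exp (-(κ * y)) * (deriv g y - κ * g y)) y := by
    intro y hy
    exact (((hasDerivAt_id' y).const_mul κ).fun_neg.exp.fun_mul (hg y hy).hasDerivAt).congr_deriv
      (by ring)
  have hmono : MonotoneOn h (Icc a b) := by
    refine monotoneOn_of_deriv_nonneg (convex_Icc a b)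
      (fun y hy => (hd y hy).continuousAt.continuousWithinAt) ?_ ?_ <;> rw [interior_Icc]
    · exact fun y hy => (hd y (Ioo_subset_Icc_self hy)).differentiableAt.differentiableWithinAt
    · intro y hy
      rw [(hd y (Ioo_subset_Icc_self hy)).deriv]
      exact mul_nonneg (exp_pos _).le (sub_nonneg.2 (hκ y hy))
  calc g a = exp (κ * a) * h a := by
        simp only [h, ← mul_assoc, ← exp_add, add_neg_cancel, exp_zero, one_mul]
    _ ≤ exp (κ * a) * h b := by gcongr; exact hmono (left_mem_Icc.2 hab) (right_mem_Icc.2 hab) hab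
    _ = g b * exp (-(κ * (b - a))) := by
      simp only [h, ← mul_assoc, ← exp_add]
      rw [mul_comm]
      ring_nf

theorem nonpos_of_frequently_mul_log_le {p D : ℝ} (h : ∃ᶠ k : ℕ in atTop, p * log k ≤ D) :
    p ≤ 0 := by
  by_contra! hp
  have hlarge : ∀ᶠ k : ℕ in atTop, D < p * log k :=
    ((tendsto_log_atTop.comp tendsto_natCast_atTop_atTop).const_mul_atTop hp).eventually_gt_atTop D
  obtain ⟨k, hle, hlt⟩ := (h.and_eventually hlarge).exists
  exact hle.not_gt hlt

theorem summable_exp_neg_mul_rpow {t ε : ℝ} (ht : 0 < t) (hε : 0 < ε) :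
    Summable fun n : ℕ => exp (-(t * (n : ℝ) ^ ε)) := by
  have ho := (isLittleO_exp_neg_mul_rpow_atTop ht (-2 / ε)).comp_tendsto
    ((tendsto_rpow_atTop hε).comp tendsto_natCast_atTop_atTop)
  refine summable_of_isBigO_nat (summable_nat_rpow.2 (by norm_num : (-2 : ℝ) < -1)) ?_
  refine (ho.isBigO.congr_left fun n => by simp [neg_mul]).congr_right fun n => ?_
  simp only [Function.comp, ← rpow_mul (Nat.cast_nonneg n)]
  rw [mul_div_cancel₀ _ hε.ne']

theorem log_sub_log_le_sum_Ico_div {S : ℕ → ℝ} {M k : ℕ} (hMk : M ≤ k)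
    (hS : ∀ s ∈ Finset.Icc M k, 0 < S s) :
    log (S k) - log (S M) ≤ ∑ s ∈ Finset.Ico M k, (S (s + 1) - S s) / S s := by
  rw [← Finset.sum_Ico_sub (fun s => log (S s)) hMk]
  refine Finset.sum_le_sum fun s hs => ?_
  obtain ⟨hMs, hsk⟩ := Finset.mem_Ico.1 hs
  have hs0 := hS s (Finset.mem_Icc.2 ⟨hMs, hsk.le⟩)
  have hs1 := hS (s + 1) (Finset.mem_Icc.2 ⟨by omega, hsk⟩)
  rw [← log_div hs1.ne' hs0.ne', sub_div, div_self hs0.ne']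
  exact log_le_sub_one_of_pos (div_pos hs1 hs0)

theorem limsup_inv_mul_log_le {u : ℕ → ℝ} {t : ℝ}
    (hu : ∀ᶠ n in atTop, 0 ≤ u n ∧ u n ≤ exp (-(t * n))) :
    atTop.limsup (fun n : ℕ => (((n : ℝ)⁻¹ : ℝ) : EReal) *
      (if u n = 0 then (⊥ : EReal) else ((log (u n) : ℝ) : EReal))) ≤ ((-t : ℝ) : EReal) := by
  refine limsup_le_of_le (by isBoundedDefault) ?_
  filter_upwards [hu, eventually_gt_atTop 0] with n ⟨hu0, hule⟩ hn
  have hinv : (0 : ℝ) < (n : ℝ)⁻¹ := by positivity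
  split_ifs with h0
  · rw [EReal.mul_bot_of_pos (by exact_mod_cast hinv)]
    exact bot_le
  · have hlog : log (u n) ≤ -(t * n) := by
      simpa using log_le_log (lt_of_le_of_ne hu0 (Ne.symm h0)) hule
    rw [← EReal.coe_mul, EReal.coe_le_coe_iff]
    calc (n : ℝ)⁻¹ * log (u n) ≤ (n : ℝ)⁻¹ * -(t * n) := by gcongr
      _ = -t := by field_simp

def AlmostLinearSums (f : ℕ → ℝ → ℝ) (y : ℝ) : Prop :=
  ∀ ε : ℝ, 0 < ε → ∃ᶠ n : ℕ in atTop, (n : ℝ) ^ (1 - ε) ≤ ∑ s ∈ Finset.Icc 1 n, f s y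

/-- `lam₁` is inserted so that the threshold is `lam₁`, not `sInf ∅ = 0`, when the partial sums
grow almost linearly nowhere. -/
noncomputable def threshold (lam₀ lam₁ : ℝ) (f : ℕ → ℝ → ℝ) : ℝ :=
  sInf (insert lam₁ {y ∈ Icc lam₀ lam₁ | AlmostLinearSums f y})

section threshold

variable {lam₀ lam₁ : ℝ} {f : ℕ → ℝ → ℝ}

theorem bddBelow_insert_almostLinearSums :
    BddBelow (insert lam₁ {y ∈ Icc lam₀ lam₁ | AlmostLinearSums f y}) :=
  bddBelow_insert.2 ⟨lam₀, fun _ hy => hy.1.1⟩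

theorem threshold_le : threshold lam₀ lam₁ f ≤ lam₁ :=
  csInf_le bddBelow_insert_almostLinearSums (mem_insert _ _)

theorem threshold_mem_Icc (h : lam₀ ≤ lam₁) : threshold lam₀ lam₁ f ∈ Icc lam₀ lam₁ :=
  ⟨le_csInf (insert_nonempty _ _) (forall_mem_insert.2 ⟨h, fun _ hy => hy.1.1⟩), threshold_le⟩

theorem not_almostLinearSums_of_lt_threshold {y : ℝ} (hy : y ∈ Icc lam₀ lam₁)
    (hyt : y < threshold lam₀ lam₁ f) : ¬ AlmostLinearSums f y := fun h =>
  (csInf_le bddBelow_insert_almostLinearSums (mem_insert_of_mem _ ⟨hy, h⟩)).not_gt hyt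

end threshold

structure DiffIneqFamily (lam₀ lam₁ c : ℝ) (f : ℕ → ℝ → ℝ) : Prop where
  nonneg_le_one : ∀ n ≥ 1, ∀ x ∈ Icc lam₀ lam₁, 0 ≤ f n x ∧ f n x ≤ 1
  monotoneOn : ∀ n ≥ 1, MonotoneOn (f n) (Icc lam₀ lam₁)
  succ_le : ∀ n ≥ 1, ∀ x ∈ Icc lam₀ lam₁, f (n + 1) x ≤ f n x
  diffIneq : ∀ n ≥ 1, ∀ x ∈ Ioo lam₀ lam₁,
    0 < ∑ s ∈ Finset.Icc 1 n, f s x ∧ DifferentiableAt ℝ (f n) x ∧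
      c * ((n : ℝ) / ∑ s ∈ Finset.Icc 1 n, f s x) * f n x * (1 - f n x) ≤ deriv (f n) x

namespace DiffIneqFamily

variable {lam₀ lam₁ c : ℝ} {f : ℕ → ℝ → ℝ}

theorem apply_le_apply_of_le (hf : DiffIneqFamily lam₀ lam₁ c f) {n m : ℕ} (hn : 1 ≤ n)
    (hnm : n ≤ m) {y x : ℝ} (hy : y ∈ Icc lam₀ lam₁) (hx : x ∈ Icc lam₀ lam₁) (hyx : y ≤ x) :
    f m y ≤ f n x := by
  refine le_trans ?_ (hf.monotoneOn n hn hy hx hyx)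
  induction m, hnm using Nat.le_induction with
  | base => exact le_rfl
  | succ m hnm ih => exact (hf.succ_le m (hn.trans hnm) y hy).trans ih

theorem sum_le_sum_of_le (hf : DiffIneqFamily lam₀ lam₁ c f) (n : ℕ) {y x : ℝ}
    (hy : y ∈ Icc lam₀ lam₁) (hx : x ∈ Icc lam₀ lam₁) (hyx : y ≤ x) :
    ∑ s ∈ Finset.Icc 1 n, f s y ≤ ∑ s ∈ Finset.Icc 1 n, f s x :=
  Finset.sum_le_sum fun s hs => hf.monotoneOn s (Finset.mem_Icc.1 hs).1 hy hx hyx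

theorem sum_le_nat (hf : DiffIneqFamily lam₀ lam₁ c f) (n : ℕ) {x : ℝ}
    (hx : x ∈ Icc lam₀ lam₁) : ∑ s ∈ Finset.Icc 1 n, f s x ≤ n := by
  simpa using Finset.sum_le_sum fun s hs => (hf.nonneg_le_one s (Finset.mem_Icc.1 hs).1 x hx).2

theorem nat_mul_le_sum (hf : DiffIneqFamily lam₀ lam₁ c f) (n : ℕ) {x : ℝ}
    (hx : x ∈ Icc lam₀ lam₁) : n * f n x ≤ ∑ s ∈ Finset.Icc 1 n, f s x := by
  simpa using Finset.sum_le_sum fun s hs =>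
    hf.apply_le_apply_of_le (Finset.mem_Icc.1 hs).1 (Finset.mem_Icc.1 hs).2 hx hx le_rfl

theorem deriv_nonneg (hf : DiffIneqFamily lam₀ lam₁ c f) (hc : 0 < c) {n : ℕ} (hn : 1 ≤ n)
    {x : ℝ} (hx : x ∈ Ioo lam₀ lam₁) : 0 ≤ deriv (f n) x := by
  obtain ⟨hpos, -, hineq⟩ := hf.diffIneq n hn x hx
  obtain ⟨h0, h1⟩ := hf.nonneg_le_one n hn x (Ioo_subset_Icc_self hx)
  exact le_trans (by have := sub_nonneg.2 h1; positivity) hineq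

/-- `2 K ≤ n` forces `f n ≤ Σₙ / n ≤ 1/2` on `[a, b]`, so there `(f n)' ≥ (c/2) (n/K) f n`. -/
theorem apply_le_exp_neg (hf : DiffIneqFamily lam₀ lam₁ c f) (hc : 0 < c) {a b K : ℝ} {n : ℕ}
    (ha : lam₀ < a) (hab : a ≤ b) (hb : b < lam₁) (hn : 1 ≤ n)
    (hK : ∑ s ∈ Finset.Icc 1 n, f s b ≤ K) (hKn : 2 * K ≤ n) :
    f n a ≤ exp (-(c / 2 * (n / K) * (b - a))) := by
  have hsub : Icc a b ⊆ Ioo lam₀ lam₁ := Icc_subset_Ioo ha hb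
  have hbI : b ∈ Icc lam₀ lam₁ := Ioo_subset_Icc_self (hsub (right_mem_Icc.2 hab))
  have hn0 : (0 : ℝ) < n := by exact_mod_cast hn
  have hfb : f n b ≤ 1 / 2 := by
    have := (hf.nat_mul_le_sum n hbI).trans hK
    rw [le_div_iff₀ two_pos]
    nlinarith
  have hrate : ∀ y ∈ Ioo a b, c / 2 * (n / K) * f n y ≤ deriv (f n) y := by
    intro y hy
    have hyI : y ∈ Icc lam₀ lam₁ := Ioo_subset_Icc_self (hsub (Ioo_subset_Icc_self hy))
    obtain ⟨hpos, -, hineq⟩ := hf.diffIneq n hn y (hsub (Ioo_subset_Icc_self hy))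
    have hSK : ∑ s ∈ Finset.Icc 1 n, f s y ≤ K :=
      (hf.sum_le_sum_of_le n hyI hbI hy.2.le).trans hK
    have hfy : f n y ≤ 1 / 2 := (hf.monotoneOn n hn hyI hbI hy.2.le).trans hfb
    have hfy0 := (hf.nonneg_le_one n hn y hyI).1
    calc c / 2 * (n / K) * f n y = c * (n / K) * f n y * (1 / 2) := by ring
      _ ≤ c * (n / ∑ s ∈ Finset.Icc 1 n, f s y) * f n y * (1 - f n y) := by
        gcongr
        linarith
      _ ≤ deriv (f n) y := hineq
  calc f n a ≤ f n b * exp (-(c / 2 * (n / K) * (b - a))) :=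
        le_mul_exp_neg_of_mul_le_deriv hab
          (fun y hy => (hf.diffIneq n hn y (hsub hy)).2.1) hrate
    _ ≤ exp (-(c / 2 * (n / K) * (b - a))) :=
        mul_le_of_le_one_left (exp_pos _).le (by linarith)

theorem eventually_apply_le_exp_neg_mul_rpow (hf : DiffIneqFamily lam₀ lam₁ c f) (hc : 0 < c)
    {a b ε : ℝ} (ha : lam₀ < a) (hab : a ≤ b) (hb : b < lam₁) (hε : 0 < ε)
    (hsum : ∀ᶠ n : ℕ in atTop, ∑ s ∈ Finset.Icc 1 n, f s b ≤ (n : ℝ) ^ (1 - ε)) :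
    ∀ᶠ n : ℕ in atTop, f n a ≤ exp (-(c / 2 * (b - a) * (n : ℝ) ^ ε)) := by
  have hlarge : ∀ᶠ n : ℕ in atTop, 2 ≤ (n : ℝ) ^ ε :=
    ((tendsto_rpow_atTop hε).comp tendsto_natCast_atTop_atTop).eventually_ge_atTop 2
  filter_upwards [hsum, hlarge, eventually_ge_atTop 1] with n hsumn hlargen hn
  have hn0 : (0 : ℝ) < n := by exact_mod_cast hn
  have hsplit : (n : ℝ) ^ (1 - ε) * (n : ℝ) ^ ε = n := by
    rw [← rpow_add hn0, sub_add_cancel, rpow_one]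
  have hK : 0 < (n : ℝ) ^ (1 - ε) := rpow_pos_of_pos hn0 _
  have hquot : (n : ℝ) / (n : ℝ) ^ (1 - ε) = (n : ℝ) ^ ε := by
    rw [div_eq_iff hK.ne', mul_comm, hsplit]
  have := hf.apply_le_exp_neg hc ha hab hb hn hsumn (by nlinarith)
  rwa [hquot, mul_right_comm] at this

theorem eventually_apply_le_exp_neg_mul (hf : DiffIneqFamily lam₀ lam₁ c f) (hc : 0 < c)
    {x a B : ℝ} (hx : lam₀ < x) (hxa : x < a) (ha : a < lam₁)
    (hB : ∀ n, ∑ s ∈ Finset.Icc 1 n, f s a ≤ B) :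
    ∃ t > 0, ∀ᶠ n : ℕ in atTop, f n x ≤ exp (-(t * n)) := by
  have hB0 : 0 < B := (hf.diffIneq 1 le_rfl a ⟨hx.trans hxa, ha⟩).1.trans_le (hB 1)
  refine ⟨c / 2 * (a - x) / B, by have := sub_pos.2 hxa; positivity, ?_⟩
  filter_upwards [eventually_ge_atTop 1, eventually_ge_atTop ⌈2 * B⌉₊] with n hn hBn
  convert hf.apply_le_exp_neg hc hx hxa.le ha hn (hB n) (Nat.ceil_le.1 hBn) using 3
  ring

theorem limsup_lt_zero_of_sum_le_rpow (hf : DiffIneqFamily lam₀ lam₁ c f) (hc : 0 < c)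
    {x b : ℝ} (hx : lam₀ < x) (hxb : x < b) (hb : b < lam₁) {ε : ℝ} (hε : 0 < ε)
    (hsum : ∀ᶠ n : ℕ in atTop, ∑ s ∈ Finset.Icc 1 n, f s b ≤ (n : ℝ) ^ (1 - ε)) :
    atTop.limsup (fun n : ℕ => (((n : ℝ)⁻¹ : ℝ) : EReal) *
      (if f n x = 0 then (⊥ : EReal) else ((log (f n x) : ℝ) : EReal))) < 0 := by
  obtain ⟨a, hxa, hab⟩ := exists_between hxb
  have haI : a ∈ Icc lam₀ lam₁ := ⟨by linarith, by linarith⟩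
  have hdecay := hf.eventually_apply_le_exp_neg_mul_rpow hc (hx.trans hxa) hab.le hb hε hsum
  have hsummable : Summable fun n => |f n a| := by
    have hrate : 0 < c / 2 * (b - a) := by have := sub_pos.2 hab; positivity
    refine (summable_exp_neg_mul_rpow hrate hε).of_norm_bounded_eventually_nat ?_
    filter_upwards [hdecay, eventually_ge_atTop 1] with n hn h1
    rwa [norm_abs_eq_norm, norm_of_nonneg (hf.nonneg_le_one n h1 a haI).1]
  have hB : ∀ n, ∑ s ∈ Finset.Icc 1 n, f s a ≤ ∑' s, |f s a| := fun n =>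
    (Finset.sum_le_sum fun s _ => le_abs_self _).trans
      (hsummable.sum_le_tsum _ fun s _ => abs_nonneg _)
  obtain ⟨t, ht, hxdecay⟩ := hf.eventually_apply_le_exp_neg_mul hc hx hxa (hab.trans hb) hB
  refine (limsup_inv_mul_log_le ?_).trans_lt (by exact_mod_cast neg_neg_of_pos ht)
  filter_upwards [hxdecay, eventually_ge_atTop 1] with n hn h1
  exact ⟨(hf.nonneg_le_one n h1 x ⟨hx.le, by linarith⟩).1, hn⟩

theorem half_mul_log_sub_log_le_sum_deriv_div (hf : DiffIneqFamily lam₀ lam₁ c f) (hc : 0 < c)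
    {y : ℝ} (hy : y ∈ Ioo lam₀ lam₁) {M k : ℕ} (hM : 1 ≤ M) (hMk : M ≤ k)
    (hsmall : ∀ s ≥ M, f s y ≤ 1 / 2) :
    c / 2 * (log (∑ s ∈ Finset.Icc 1 k, f s y) - log (∑ s ∈ Finset.Icc 1 M, f s y)) ≤
      ∑ s ∈ Finset.Icc 1 k, deriv (f s) y / s := by
  set S : ℕ → ℝ := fun m => ∑ s ∈ Finset.Icc 1 m, f s y
  have hS : ∀ s ≥ 1, 0 < S s := fun s hs => (hf.diffIneq s hs y hy).1
  have hyI : y ∈ Icc lam₀ lam₁ := Ioo_subset_Icc_self hy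
  calc c / 2 * (log (S k) - log (S M))
      ≤ c / 2 * ∑ s ∈ Finset.Ico M k, (S (s + 1) - S s) / S s := by
        gcongr
        exact log_sub_log_le_sum_Ico_div hMk fun s hs => hS s (hM.trans (Finset.mem_Icc.1 hs).1)
    _ ≤ ∑ s ∈ Finset.Ico M k, c / 2 * (f s y / S s) := by
        rw [Finset.mul_sum]
        refine Finset.sum_le_sum fun s hs => ?_
        have hs1 : 1 ≤ s := hM.trans (Finset.mem_Ico.1 hs).1
        have hsucc : S (s + 1) - S s = f (s + 1) y := by
          simp only [S, Finset.sum_Icc_succ_top (by omega : 1 ≤ s + 1), add_sub_cancel_left]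
        rw [hsucc]
        gcongr
        · exact (hS s hs1).le
        · exact hf.succ_le s hs1 y hyI
    _ ≤ ∑ s ∈ Finset.Ico M k, deriv (f s) y / s := by
        gcongr with s hs
        have hMs := (Finset.mem_Ico.1 hs).1
        obtain ⟨-, -, hineq⟩ := hf.diffIneq s (hM.trans hMs) y hy
        have hs0 : (0 : ℝ) < s := by exact_mod_cast hM.trans hMs
        have hfs := hsmall s hMs
        have hfs0 := (hf.nonneg_le_one s (hM.trans hMs) y hyI).1
        have hSs := hS s (hM.trans hMs)
        rw [le_div_iff₀ hs0]
        calc c / 2 * (f s y / S s) * s = c * (s / S s) * f s y * (1 / 2) := by ring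
          _ ≤ c * (s / S s) * f s y * (1 - f s y) := by gcongr; linarith
          _ ≤ deriv (f s) y := hineq
    _ ≤ ∑ s ∈ Finset.Icc 1 k, deriv (f s) y / s := by
        refine Finset.sum_le_sum_of_subset_of_nonneg
          (Finset.Ico_subset_Icc_self.trans (Finset.Icc_subset_Icc hM le_rfl)) fun s hs _ =>
            div_nonneg (hf.deriv_nonneg hc (Finset.mem_Icc.1 hs).1 hy) (Nat.cast_nonneg s)

theorem sum_div_le (hf : DiffIneqFamily lam₀ lam₁ c f) {x : ℝ} (hx : x ∈ Icc lam₀ lam₁)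
    {n : ℕ} (hn : 1 ≤ n) (k : ℕ) :
    ∑ s ∈ Finset.Icc 1 k, f s x / s ≤ n + f n x * (1 + log k) := by
  have hfnx := (hf.nonneg_le_one n hn x hx).1
  calc ∑ s ∈ Finset.Icc 1 k, f s x / s
      ≤ ∑ s ∈ Finset.Icc 1 k, ((if s ≤ n then 1 else 0) + f n x * (s : ℝ)⁻¹) := by
        gcongr with s hs
        have hs1 := (Finset.mem_Icc.1 hs).1
        have hs0 : (1 : ℝ) ≤ s := by exact_mod_cast hs1
        split_ifs with hsn
        · have := (hf.nonneg_le_one s hs1 x hx).2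
          calc f s x / s ≤ 1 := div_le_one_of_le₀ (this.trans hs0) (by positivity)
            _ ≤ 1 + f n x * (s : ℝ)⁻¹ := le_add_of_nonneg_right (by positivity)
        · rw [zero_add, ← div_eq_mul_inv]
          gcongr
          exact hf.apply_le_apply_of_le hn (by omega) hx hx le_rfl
    _ = ((Finset.Icc 1 k).filter (· ≤ n)).card + f n x * harmonic k := by
        rw [Finset.sum_add_distrib, Finset.sum_boole, ← Finset.mul_sum, harmonic_eq_sum_Icc]
        push_cast
        rfl
    _ ≤ n + f n x * (1 + log k) := by
        gcongr
        · refine (Finset.card_le_card fun s hs => ?_).trans (Nat.card_Icc 1 n).le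
          simp only [Finset.mem_filter, Finset.mem_Icc] at hs ⊢
          omega
        · exact harmonic_le_one_add_log k

/-- Mean value theorem for `G = ∑_{s ≤ k} f s / s` on `[l, x]`. -/
theorem half_mul_log_sub_log_mul_le (hf : DiffIneqFamily lam₀ lam₁ c f) (hc : 0 < c)
    {l x : ℝ} (hl : lam₀ < l) (hlx : l < x) (hx : x < lam₁) {n M k : ℕ} (hn : 1 ≤ n)
    (hnM : n ≤ M) (hMk : M ≤ k) (hMx : f M x ≤ 1 / 2) :
    c / 2 * (x - l) * (log (∑ s ∈ Finset.Icc 1 k, f s l) - log M) ≤ n + f n x * (1 + log k) := by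
  set G : ℝ → ℝ := fun y => ∑ s ∈ Finset.Icc 1 k, f s y / s
  have hsub : Icc l x ⊆ Ioo lam₀ lam₁ := Icc_subset_Ioo hl hx
  have hM : 1 ≤ M := hn.trans hnM
  have hxI : x ∈ Icc lam₀ lam₁ := Ioo_subset_Icc_self (hsub (right_mem_Icc.2 hlx.le))
  have hlI : l ∈ Icc lam₀ lam₁ := Ioo_subset_Icc_self (hsub (left_mem_Icc.2 hlx.le))
  have hG : ∀ y ∈ Icc l x, HasDerivAt G (∑ s ∈ Finset.Icc 1 k, deriv (f s) y / s) y :=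
    fun y hy => HasDerivAt.fun_sum fun s hs =>
      (hf.diffIneq s (Finset.mem_Icc.1 hs).1 y (hsub hy)).2.1.hasDerivAt.div_const _
  have hrate : ∀ y ∈ interior (Icc l x),
      c / 2 * (log (∑ s ∈ Finset.Icc 1 k, f s l) - log M) ≤ deriv G y := by
    rw [interior_Icc]
    intro y hy
    have hyI : y ∈ Icc lam₀ lam₁ := Ioo_subset_Icc_self (hsub (Ioo_subset_Icc_self hy))
    rw [(hG y (Ioo_subset_Icc_self hy)).deriv]
    refine le_trans ?_ (hf.half_mul_log_sub_log_le_sum_deriv_div hc (hsub (Ioo_subset_Icc_self hy))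
      hM hMk fun s hs => (hf.apply_le_apply_of_le hM hs hyI hxI hy.2.le).trans hMx)
    gcongr c / 2 * (log ?_ - log ?_)
    · exact (hf.diffIneq k (hM.trans hMk) l (hsub (left_mem_Icc.2 hlx.le))).1
    · exact hf.sum_le_sum_of_le k hlI hyI hy.1.le
    · exact (hf.diffIneq M hM y (hsub (Ioo_subset_Icc_self hy))).1
    · exact hf.sum_le_nat M hyI
  have hincr := (convex_Icc l x).mul_sub_le_image_sub_of_le_deriv
    (fun y hy => (hG y hy).continuousAt.continuousWithinAt)
    (fun y hy => (hG y (interior_subset hy)).differentiableAt.differentiableWithinAt) hrate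
    l (left_mem_Icc.2 hlx.le) x (right_mem_Icc.2 hlx.le) hlx.le
  have hGl : 0 ≤ G l := Finset.sum_nonneg fun s hs =>
    div_nonneg (hf.nonneg_le_one s (Finset.mem_Icc.1 hs).1 l hlI).1 (Nat.cast_nonneg s)
  linarith [hf.sum_div_le hxI hn k]

theorem half_mul_sub_le_apply (hf : DiffIneqFamily lam₀ lam₁ c f) (hc : 0 < c)
    {l x : ℝ} (hl : lam₀ < l) (hlx : l < x) (hx : x < lam₁) (hgrowth : AlmostLinearSums f l)
    {N n : ℕ} (hN : 1 ≤ N) (hNx : f N x ≤ 1 / 2) (hn : 1 ≤ n) :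
    c / 2 * (x - l) ≤ f n x := by
  set A := c / 2 * (x - l) with hA_def
  have hA : 0 < A := by have := sub_pos.2 hlx; positivity
  set M := max N n with hM_def
  have hxI : x ∈ Icc lam₀ lam₁ := ⟨(hl.trans hlx).le, hx.le⟩
  have hMx : f M x ≤ 1 / 2 :=
    (hf.apply_le_apply_of_le hN (le_max_left N n) hxI hxI le_rfl).trans hNx
  refine le_of_forall_sub_le fun δ hδ => ?_
  have hfreq : ∃ᶠ k : ℕ in atTop, (A - δ - f n x) * log k ≤ n + f n x + A * log M := by
    refine (hgrowth (δ / A) (div_pos hδ hA)).mp ((eventually_ge_atTop M).mono fun k hMk hk => ?_)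
    have hk0 : (0 : ℝ) < k := by exact_mod_cast (hn.trans (le_max_right N n)).trans hMk
    have hlog : (1 - δ / A) * log k ≤ log (∑ s ∈ Finset.Icc 1 k, f s l) := by
      rw [← log_rpow hk0]
      exact log_le_log (rpow_pos_of_pos hk0 _) hk
    have hAδ : A * (1 - δ / A) = A - δ := by field_simp
    have hkl : (A - δ) * log k ≤ A * log (∑ s ∈ Finset.Icc 1 k, f s l) := by
      rw [← hAδ, mul_assoc]
      exact mul_le_mul_of_nonneg_left hlog hA.le
    have := hf.half_mul_log_sub_log_mul_le hc hl hlx hx hn (le_max_right N n) hMk hMx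
    rw [← hA_def, ← hM_def] at this
    linarith
  linarith [nonpos_of_frequently_mul_log_le hfreq]

theorem almostLinearSums_of_threshold_lt (hf : DiffIneqFamily lam₀ lam₁ c f) {y : ℝ}
    (hty : threshold lam₀ lam₁ f < y) (hy : y ≤ lam₁) : AlmostLinearSums f y := by
  obtain ⟨z, hz, hzy⟩ := exists_lt_of_csInf_lt (insert_nonempty _ _) hty
  rcases hz with rfl | ⟨hzI, hz⟩
  · exact absurd hy hzy.not_ge
  · exact fun ε hε => (hz ε hε).mono fun n hn =>
      hn.trans (hf.sum_le_sum_of_le n hzI ⟨hzI.1.trans hzy.le, hy⟩ hzy.le)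

theorem limsup_lt_zero_of_lt_threshold (hf : DiffIneqFamily lam₀ lam₁ c f) (hc : 0 < c)
    {x : ℝ} (hx : x ∈ Ioo lam₀ (threshold lam₀ lam₁ f)) :
    atTop.limsup (fun n : ℕ => (((n : ℝ)⁻¹ : ℝ) : EReal) *
      (if f n x = 0 then (⊥ : EReal) else ((log (f n x) : ℝ) : EReal))) < 0 := by
  obtain ⟨b, hxb, hbt⟩ := exists_between hx.2
  have hb : b < lam₁ := hbt.trans_le threshold_le
  have hsub := not_almostLinearSums_of_lt_threshold ⟨(hx.1.trans hxb).le, hb.le⟩ hbt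
  simp only [AlmostLinearSums, not_forall, not_frequently, not_le, exists_prop] at hsub
  obtain ⟨ε, hε, hsum⟩ := hsub
  exact hf.limsup_lt_zero_of_sum_le_rpow hc hx.1 hxb hb hε (hsum.mono fun n hn => hn.le)

theorem half_mul_sub_threshold_le (hf : DiffIneqFamily lam₀ lam₁ c f) (hc : 0 < c)
    (h₀₁ : lam₀ ≤ lam₁) {x : ℝ} (hx : x ∈ Ioo (threshold lam₀ lam₁ f) lam₁) {N n : ℕ}
    (hN : 1 ≤ N) (hNx : f N x ≤ 1 / 2) (hn : 1 ≤ n) :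
    c / 2 * (x - threshold lam₀ lam₁ f) ≤ f n x := by
  have hlim : Tendsto (fun l => c / 2 * (x - l)) (𝓝[>] threshold lam₀ lam₁ f)
      (𝓝 (c / 2 * (x - threshold lam₀ lam₁ f))) :=
    tendsto_nhdsWithin_of_tendsto_nhds (Continuous.tendsto (by fun_prop) _)
  refine le_of_tendsto hlim ?_
  filter_upwards [Ioo_mem_nhdsGT hx.1] with l hl
  exact hf.half_mul_sub_le_apply hc ((threshold_mem_Icc h₀₁).1.trans_lt hl.1) hl.2 hx.2
    (hf.almostLinearSums_of_threshold_lt hl.1 (hl.2.trans hx.2).le) hN hNx hn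

/-- If no `f N x ≤ 1/2`, then `f n x > 1/2 ≥ (x - threshold) / (2 (lam₁ - lam₀))`. -/
theorem min_mul_sub_threshold_le (hf : DiffIneqFamily lam₀ lam₁ c f) (hc : 0 < c)
    (h₀₁ : lam₀ < lam₁) {x : ℝ} (hx : x ∈ Ioo (threshold lam₀ lam₁ f) lam₁) {n : ℕ}
    (hn : 1 ≤ n) :
    min (c / 2) (1 / (2 * (lam₁ - lam₀))) * (x - threshold lam₀ lam₁ f) ≤ f n x := by
  have ht := threshold_mem_Icc (f := f) h₀₁.le
  have hxt : 0 ≤ x - threshold lam₀ lam₁ f := sub_nonneg.2 hx.1.le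
  by_cases hsmall : ∃ N ≥ 1, f N x ≤ 1 / 2
  · obtain ⟨N, hN, hNx⟩ := hsmall
    calc _ ≤ c / 2 * (x - threshold lam₀ lam₁ f) := by gcongr; exact min_le_left _ _
      _ ≤ f n x := hf.half_mul_sub_threshold_le hc h₀₁.le hx hN hNx hn
  · push Not at hsmall
    have hlen : 0 < lam₁ - lam₀ := sub_pos.2 h₀₁
    calc _ ≤ 1 / (2 * (lam₁ - lam₀)) * (lam₁ - lam₀) := by
          gcongr
          · exact min_le_right _ _
          · exact hx.2.le
          · exact ht.1
      _ = 1 / 2 := by field_simp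
      _ ≤ f n x := (hsmall n hn).le

end DiffIneqFamily

theorem sharp_threshold_from_differential_inequality_general
    (lam₀ lam₁ c : ℝ) (h₀₁ : lam₀ < lam₁) (hc : 0 < c)
    (f : ℕ → ℝ → ℝ)
    (hbound : ∀ n ≥ 1, ∀ x ∈ Set.Icc lam₀ lam₁, 0 ≤ f n x ∧ f n x ≤ 1)
    (hmono : ∀ n ≥ 1, MonotoneOn (f n) (Set.Icc lam₀ lam₁))
    (hdecr : ∀ n ≥ 1, ∀ x ∈ Set.Icc lam₀ lam₁, f (n + 1) x ≤ f n x)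
    (hderiv : ∀ n ≥ 1, ∀ x ∈ Set.Ioo lam₀ lam₁,
      0 < ∑ s ∈ Finset.Icc 1 n, f s x ∧
      DifferentiableAt ℝ (f n) x ∧
      c * ((n : ℝ) / ∑ s ∈ Finset.Icc 1 n, f s x) * f n x * (1 - f n x) ≤
        deriv (f n) x) :
    ∃ lam ∈ Set.Icc lam₀ lam₁, ∃ C > 0,
      (∀ x ∈ Set.Ioo lam₀ lam,
        Filter.atTop.limsup (fun n : ℕ =>
          (((n : ℝ)⁻¹ : ℝ) : EReal) *
            (if f n x = 0 then (⊥ : EReal) else ((Real.log (f n x) : ℝ) : EReal)))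
          < (0 : EReal)) ∧
      (∀ x ∈ Set.Ioo lam lam₁, ∀ n ≥ 1, C * (x - lam) ≤ f n x) := by
  have hf : DiffIneqFamily lam₀ lam₁ c f := ⟨hbound, hmono, hdecr, hderiv⟩
  have hlen : 0 < lam₁ - lam₀ := sub_pos.2 h₀₁
  exact ⟨threshold lam₀ lam₁ f, threshold_mem_Icc h₀₁.le, _, by positivity,
    fun x hx => hf.limsup_lt_zero_of_lt_threshold hc hx,
    fun x hx n hn => hf.min_mul_sub_threshold_le hc h₀₁ hx hn⟩

/-- Let `0 ≤ λ₀ < λ₁` and `c > 0`, and for each `n ≥ 1` let `f n : ℝ → ℝ`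
take values in `[0,1]` on `[λ₀, λ₁]`, be nondecreasing on `[λ₀, λ₁]`, be nonincreasing in
`n` on `[λ₀, λ₁]`, and be differentiable on `(λ₀, λ₁)` with `∑_{s=1}^n f s > 0` and
`(f n)' ≥ c · (n / ∑_{s=1}^n f s) · f n · (1 − f n)` there. Then there exist
`λ̃ ∈ [λ₀, λ₁]` and `C > 0` such that
(i) for every `λ ∈ (λ₀, λ̃)`, `limsup_{n→∞} n⁻¹ log f n λ < 0` (in `EReal`, with the
convention `log 0 = −∞`), and
(ii) for every `λ ∈ (λ̃, λ₁)`, `inf_{n ≥ 1} f n λ ≥ C (λ − λ̃)`. -/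
theorem sharp_threshold_from_differential_inequality
    (lam₀ lam₁ c : ℝ) (h₀ : 0 ≤ lam₀) (h₀₁ : lam₀ < lam₁) (hc : 0 < c)
    (f : ℕ → ℝ → ℝ)
    (hbound : ∀ n ≥ 1, ∀ x ∈ Set.Icc lam₀ lam₁, 0 ≤ f n x ∧ f n x ≤ 1)
    (hmono : ∀ n ≥ 1, MonotoneOn (f n) (Set.Icc lam₀ lam₁))
    (hdecr : ∀ n ≥ 1, ∀ x ∈ Set.Icc lam₀ lam₁, f (n + 1) x ≤ f n x)
    (hderiv : ∀ n ≥ 1, ∀ x ∈ Set.Ioo lam₀ lam₁,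
      0 < ∑ s ∈ Finset.Icc 1 n, f s x ∧
      DifferentiableAt ℝ (f n) x ∧
      c * ((n : ℝ) / ∑ s ∈ Finset.Icc 1 n, f s x) * f n x * (1 - f n x) ≤
        deriv (f n) x) :
    ∃ lam ∈ Set.Icc lam₀ lam₁, ∃ C > 0,
      (∀ x ∈ Set.Ioo lam₀ lam,
        Filter.atTop.limsup (fun n : ℕ =>
          (((n : ℝ)⁻¹ : ℝ) : EReal) *
            (if f n x = 0 then (⊥ : EReal) else ((Real.log (f n x) : ℝ) : EReal)))
          < (0 : EReal)) ∧
      (∀ x ∈ Set.Ioo lam lam₁, ∀ n ≥ 1, C * (x - lam) ≤ f n x) :=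
  sharp_threshold_from_differential_inequality_general lam₀ lam₁ c h₀₁ hc f hbound hmono hdecr
    hderiv
end
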